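/- arXiv:2508.11639 — 2 statements merged into one kernel-verified Lean document; each statement's English description precedes it below -/
import Mathlib

section
/- For every smooth compactly supported function f : ℝ → ℂ, the limit as R → ∞ of ∫_ℝ (sin(R x)/(π x)) f(x) dx equals f(0). -/
open MeasureTheory Real Complex Filter intervalIntegral
open scoped Topology FourierTransform RealInnerProductSpace

lemma aux_int_deriv (f : ℝ → ℂ) (hf : ContDiff ℝ (⊤ : ℕ∞) f) (hsupp : HasCompactSupport f)
    (n : ℕ) : MeasureTheory.Integrable (iteratedDeriv n f) := by
  have hc : Continuous (iteratedDeriv n f) := hf.continuous_iteratedDeriv n (by exact_mod_cast le_top)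
  have hs : HasCompactSupport (iteratedDeriv n f) := by
    rw [iteratedDeriv_eq_equiv_comp]
    exact (hsupp.iteratedFDeriv n).comp_left (by simp)
  exact hc.integrable_of_hasCompactSupport hs

lemma aux_fint (f : ℝ → ℂ) (hf : ContDiff ℝ (⊤ : ℕ∞) f) (hsupp : HasCompactSupport f) :
    MeasureTheory.Integrable (𝓕 f) := by
  have hfi : Integrable f := hf.continuous.integrable_of_hasCompactSupport hsupp
  have hcont : Continuous (𝓕 f) :=
    VectorFourier.fourierIntegral_continuous Real.continuous_fourierChar
      (by exact continuous_inner) hfi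
  have hder : 𝓕 (iteratedDeriv 2 f) = fun (x : ℝ) ↦ (2 * ↑π * I * ↑x) ^ 2 • (𝓕 f x) := by
    refine Real.fourier_iteratedDeriv (N := 2) (hf.of_le (by exact_mod_cast le_top)) ?_ le_rfl
    intro n _
    exact aux_int_deriv f hf hsupp n
  set C₀ : ℝ := ∫ x, ‖f x‖ with hC₀
  set C₂ : ℝ := ∫ x, ‖iteratedDeriv 2 f x‖ with hC₂
  have hb : ∀ ξ : ℝ, ‖𝓕 f ξ‖ * (1 + ξ ^ 2) ≤ C₀ + C₂ := by
    intro ξ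
    have h0 : ‖𝓕 f ξ‖ ≤ C₀ :=
      VectorFourier.norm_fourierIntegral_le_integral_norm _ _ _ _ _
    have h2 : ‖𝓕 (iteratedDeriv 2 f) ξ‖ ≤ C₂ :=
      VectorFourier.norm_fourierIntegral_le_integral_norm _ _ _ _ _
    rw [hder] at h2
    have h2' : (2 * π) ^ 2 * ξ ^ 2 * ‖𝓕 f ξ‖ ≤ C₂ := by
      have hnrm : ‖(2 * ↑π * I * (ξ:ℂ)) ^ 2 • (𝓕 f ξ)‖ = (2 * π) ^ 2 * ξ ^ 2 * ‖𝓕 f ξ‖ := by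
        rw [norm_smul, norm_pow]
        simp only [norm_mul, Complex.norm_I, Complex.norm_real, Complex.norm_ofNat,
          Real.norm_eq_abs, _root_.abs_of_nonneg Real.pi_pos.le, mul_one]
        rw [mul_pow, mul_pow, _root_.sq_abs]
      rwa [hnrm] at h2
    have h4 : (1:ℝ) ≤ (2 * π) ^ 2 := by nlinarith [Real.pi_gt_three]
    nlinarith [mul_nonneg (sq_nonneg ξ) (norm_nonneg (𝓕 f ξ)), norm_nonneg (𝓕 f ξ)]
  refine (MeasureTheory.Integrable.const_mul integrable_inv_one_add_sq (C₀ + C₂)).mono'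
    hcont.aestronglyMeasurable ?_
  filter_upwards with ξ
  have h1 : (0:ℝ) < 1 + ξ ^ 2 := by positivity
  rw [← div_eq_mul_inv, le_div_iff₀ h1]
  exact hb ξ

lemma aux_key (f : ℝ → ℂ) (hfi : MeasureTheory.Integrable f) {R : ℝ} (hR : 0 < R) :
    ∫ x : ℝ, ((if x = 0 then R / Real.pi else Real.sin (R * x) / (Real.pi * x) : ℝ) : ℂ) * f x
      = ∫ ξ in (-(R / (2 * π)))..(R / (2 * π)), 𝓕 f ξ := by
  have hπ : (0:ℝ) < π := Real.pi_pos
  set a : ℝ := R / (2 * π) with ha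
  have ha0 : 0 < a := by positivity
  rw [intervalIntegral.integral_of_le (by linarith)]
  have hmes : AEStronglyMeasurable
      (fun p : ℝ × ℝ => Complex.exp (↑(-2 * π * p.2 * p.1) * I) • f p.2)
      ((volume.restrict (Set.Ioc (-a) a)).prod volume) := by
    refine AEStronglyMeasurable.smul (f := fun p : ℝ × ℝ => Complex.exp (↑(-2 * π * p.2 * p.1) * I))
      (g := fun p : ℝ × ℝ => f p.2) ?_ ?_
    · apply Continuous.aestronglyMeasurable
      fun_prop
    · exact hfi.1.comp_snd
  have hint : Integrable
      (fun p : ℝ × ℝ => Complex.exp (↑(-2 * π * p.2 * p.1) * I) • f p.2)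
      ((volume.restrict (Set.Ioc (-a) a)).prod volume) := by
    refine ⟨hmes, ?_⟩
    have hcnst : Integrable (fun _ : ℝ => (1:ℝ)) (volume.restrict (Set.Ioc (-a) a)) := by
      rw [MeasureTheory.integrable_const_iff]
      right
      exact ⟨by simp [Real.volume_Ioc]⟩
    have hb : Integrable (fun p : ℝ × ℝ => (1:ℝ) * ‖f p.2‖)
        ((volume.restrict (Set.Ioc (-a) a)).prod volume) :=
      MeasureTheory.Integrable.mul_prod hcnst hfi.norm
    refine hb.hasFiniteIntegral.mono ?_
    filter_upwards with p
    simp [norm_smul, Complex.norm_exp]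
  have swap : ∫ ξ in Set.Ioc (-a) a, 𝓕 f ξ
      = ∫ x : ℝ, ∫ ξ in Set.Ioc (-a) a, Complex.exp (↑(-2 * π * x * ξ) * I) • f x := by
    simp_rw [Real.fourier_real_eq_integral_exp_smul]
    exact MeasureTheory.integral_integral_swap hint
  rw [swap]
  apply MeasureTheory.integral_congr_ae
  have h0 : ∀ᵐ x : ℝ, x ≠ 0 := by
    rw [MeasureTheory.ae_iff]
    simpa using measure_singleton (0:ℝ)
  filter_upwards [h0] with x hx
  have hxC : (x : ℂ) ≠ 0 := by exact_mod_cast hx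
  have hπC : ((π : ℝ) : ℂ) ≠ 0 := by exact_mod_cast Real.pi_ne_zero
  have hc : ((-2 * π * x : ℝ) : ℂ) * I ≠ 0 := by
    simp [Complex.ext_iff, hx, Real.pi_ne_zero]
  have hinner : ∫ ξ in Set.Ioc (-a) a, Complex.exp (↑(-2 * π * x * ξ) * I) • f x
      = (∫ ξ in (-a)..a, Complex.exp ((((-2 * π * x : ℝ) : ℂ) * I) * ξ)) • f x := by
    rw [intervalIntegral.integral_of_le (by linarith), ← _root_.integral_smul_const]
    apply MeasureTheory.integral_congr_ae
    filter_upwards with ξ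
    congr 1
    push_cast
    ring
  rw [hinner, integral_exp_mul_complex hc]
  rw [if_neg hx]
  have h2a : 2 * π * a = R := by rw [ha]; field_simp
  have hRC : ((R : ℝ) : ℂ) = 2 * ↑π * ↑a := by exact_mod_cast congrArg Complex.ofReal h2a.symm
  have hval : (((-2 * π * x : ℝ) : ℂ) * I * ↑a) = ((-(R * x) : ℝ) : ℂ) * I := by
    push_cast
    rw [hRC]
    ring
  have hval' : (((-2 * π * x : ℝ) : ℂ) * I * ↑(-a)) = (((R * x) : ℝ) : ℂ) * I := by
    push_cast
    rw [hRC]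
    ring
  rw [hval, hval']
  have hsin : Complex.exp (↑(-(R * x)) * I) - Complex.exp (↑(R * x) * I)
      = -2 * Complex.sin (↑(R * x)) * I := by
    push_cast
    rw [Complex.exp_mul_I, Complex.exp_mul_I]
    rw [Complex.cos_neg, Complex.sin_neg]
    ring
  rw [show ((-(R * x) : ℝ) : ℂ) = ↑(-(R * x)) from rfl, hsin, smul_eq_mul]
  congr 1
  rw [show ((Real.sin (R * x) / (π * x) : ℝ) : ℂ) = ↑(Real.sin (R * x)) / (↑π * ↑x) by
    push_cast; ring]
  rw [div_eq_div_iff (mul_ne_zero hπC hxC) hc]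
  push_cast [Complex.ofReal_sin]
  ring

theorem stmt_3 (f : ℝ → ℂ) (hf : ContDiff ℝ (⊤ : ℕ∞) f) (hsupp : HasCompactSupport f) :
    Filter.Tendsto
      (fun R : ℝ => ∫ x : ℝ,
        ((if x = 0 then R / Real.pi else Real.sin (R * x) / (Real.pi * x) : ℝ) : ℂ) * f x)
      Filter.atTop (nhds (f 0)) := by
  have hfi : Integrable f := hf.continuous.integrable_of_hasCompactSupport hsupp
  have hFi : Integrable (𝓕 f) := aux_fint f hf hsupp
  have hinv : ∫ ξ, 𝓕 f ξ = f 0 := by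
    have h := hfi.fourierInv_fourier_eq (v := 0) hFi (hf.continuous.continuousAt)
    rw [← h, Real.fourierInv_eq]
    simp
  have h2 : Tendsto (fun R : ℝ => ∫ ξ in (-(R / (2 * π)))..(R / (2 * π)), 𝓕 f ξ)
      atTop (𝓝 (f 0)) := by
    rw [← hinv]
    apply MeasureTheory.intervalIntegral_tendsto_integral hFi
    · exact tendsto_neg_atTop_atBot.comp (tendsto_id.atTop_div_const (by positivity))
    · exact tendsto_id.atTop_div_const (by positivity)
  apply h2.congr'
  filter_upwards [eventually_gt_atTop (0:ℝ)] with R hR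
  exact (aux_key f hfi hR).symm
end

section
/- The improper integral ∫_0^∞ sin²(y)/y² dy converges and equals π/2. -/
open Real MeasureTheory Set Filter


lemma int_t_exp {y : ℝ} (hy : 0 < y) :
    IntegrableOn (fun t : ℝ => t * Real.exp (-(y * t))) (Ioi 0) ∧
    ∫ t in Ioi (0:ℝ), t * Real.exp (-(y * t)) = 1 / y ^ 2 := by
  have key : ∀ t : ℝ, HasDerivAt (fun t : ℝ => -(t / y + 1 / y ^ 2) * Real.exp (-(y * t)))
      (t * Real.exp (-(y * t))) t := by
    intro t
    have h1 : HasDerivAt (fun t : ℝ => -(t / y + 1 / y ^ 2)) (-(1/y)) t := by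
      exact (((hasDerivAt_id t).div_const y).add_const (1 / y ^ 2)).neg
    have h2 : HasDerivAt (fun t : ℝ => Real.exp (-(y * t))) (-y * Real.exp (-(y*t))) t := by
      have := (Real.hasDerivAt_exp (-(y*t))).comp t (((hasDerivAt_id t).const_mul y).neg)
      exact this.congr_deriv (by ring)
    have := h1.mul h2
    refine this.congr_deriv ?_
    field_simp
    ring
  have hint : IntegrableOn (fun t : ℝ => t * Real.exp (-(y * t))) (Ioi 0) := by
    have h := (integrableOn_rpow_mul_exp_neg_mul_rpow (p := 1) (s := 1) (b := y)
      (by norm_num) zero_lt_one hy)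
    apply h.congr_fun ?_ measurableSet_Ioi
    intro t ht
    simp [Real.rpow_one, mul_comm]
  have htend : Tendsto (fun t : ℝ => -(t / y + 1 / y ^ 2) * Real.exp (-(y * t))) atTop (nhds 0) := by
    have h1 : Tendsto (fun t : ℝ => t ^ (1:ℝ) * Real.exp (-y * t)) atTop (nhds 0) :=
      tendsto_rpow_mul_exp_neg_mul_atTop_nhds_zero 1 y hy
    have h2 : Tendsto (fun t : ℝ => t ^ (0:ℝ) * Real.exp (-y * t)) atTop (nhds 0) :=
      tendsto_rpow_mul_exp_neg_mul_atTop_nhds_zero 0 y hy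
    have := ((h1.div_const y).add (h2.div_const (y^2))).neg
    have h0 : -((0:ℝ) / y + 0 / y ^ 2) = 0 := by ring
    rw [h0] at this
    apply this.congr'
    filter_upwards [eventually_gt_atTop (0:ℝ)] with t ht
    rw [Real.rpow_one, Real.rpow_zero]
    ring_nf
  refine ⟨hint, ?_⟩
  have := integral_Ioi_of_hasDerivAt_of_tendsto' (fun t _ => key t) hint htend
  simpa using this

lemma exp_int {t : ℝ} (ht : 0 < t) :
    IntegrableOn (fun y : ℝ => Real.exp (-(t * y))) (Ioi 0) := by
  simpa [neg_mul] using exp_neg_integrableOn_Ioi 0 ht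

lemma int_exp {t : ℝ} (ht : 0 < t) :
    ∫ y in Ioi (0:ℝ), Real.exp (-(t * y)) = 1 / t := by
  have key : ∀ y : ℝ, HasDerivAt (fun y : ℝ => -Real.exp (-(t * y)) / t)
      (Real.exp (-(t * y))) y := by
    intro y
    have h2 : HasDerivAt (fun y : ℝ => Real.exp (-(t * y))) (-t * Real.exp (-(t*y))) y := by
      have := (Real.hasDerivAt_exp (-(t*y))).comp y (((hasDerivAt_id y).const_mul t).neg)
      exact this.congr_deriv (by ring)
    have := (h2.neg).div_const t
    refine this.congr_deriv ?_
    field_simp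
  have htend : Tendsto (fun y : ℝ => -Real.exp (-(t * y)) / t) atTop (nhds 0) := by
    have : Tendsto (fun y : ℝ => t * y) atTop atTop :=
      tendsto_id.const_mul_atTop ht
    have h := (Real.tendsto_exp_neg_atTop_nhds_zero.comp this).neg.div_const t
    simpa using h
  have := integral_Ioi_of_hasDerivAt_of_tendsto' (fun y _ => key y) (exp_int ht) htend
  rw [this]
  norm_num
  field_simp

lemma cos_exp_int {t : ℝ} (ht : 0 < t) :
    IntegrableOn (fun y : ℝ => Real.cos (2*y) * Real.exp (-(t * y))) (Ioi 0) := by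
  apply Integrable.mono (exp_int ht)
  · exact (((Real.continuous_cos.comp (continuous_const.mul continuous_id)).mul
      (Real.continuous_exp.comp (continuous_const.mul continuous_id).neg))).aestronglyMeasurable
  · filter_upwards with y
    rw [Real.norm_eq_abs, Real.norm_eq_abs, abs_mul, Real.abs_exp]
    nlinarith [Real.abs_cos_le_one (2*y), Real.exp_pos (-(t*y)), abs_nonneg (Real.cos (2*y))]

lemma int_cos_exp {t : ℝ} (ht : 0 < t) :
    ∫ y in Ioi (0:ℝ), Real.cos (2*y) * Real.exp (-(t * y)) = t / (t^2 + 4) := by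
  have ht4 : t^2 + 4 ≠ 0 := by positivity
  have key : ∀ y : ℝ, HasDerivAt
      (fun y : ℝ => Real.exp (-(t*y)) * (-t * Real.cos (2*y) + 2 * Real.sin (2*y)) / (t^2+4))
      (Real.cos (2*y) * Real.exp (-(t * y))) y := by
    intro y
    have he : HasDerivAt (fun y : ℝ => Real.exp (-(t * y))) (-t * Real.exp (-(t*y))) y := by
      have := (Real.hasDerivAt_exp (-(t*y))).comp y (((hasDerivAt_id y).const_mul t).neg)
      exact this.congr_deriv (by ring)
    have hc : HasDerivAt (fun y : ℝ => Real.cos (2*y)) (-2 * Real.sin (2*y)) y := by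
      have := (Real.hasDerivAt_cos (2*y)).comp y ((hasDerivAt_id y).const_mul 2)
      simpa [Function.comp_def, mul_comm] using this
    have hs : HasDerivAt (fun y : ℝ => Real.sin (2*y)) (2 * Real.cos (2*y)) y := by
      have := (Real.hasDerivAt_sin (2*y)).comp y ((hasDerivAt_id y).const_mul 2)
      simpa [Function.comp_def, mul_comm] using this
    have hg : HasDerivAt (fun y : ℝ => -t * Real.cos (2*y) + 2 * Real.sin (2*y))
        (-t * (-2 * Real.sin (2*y)) + 2 * (2 * Real.cos (2*y))) y :=
      ((hc.const_mul (-t)).add (hs.const_mul 2))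
    have := (he.mul hg).div_const (t^2+4)
    refine this.congr_deriv ?_
    field_simp
    ring
  have htend : Tendsto
      (fun y : ℝ => Real.exp (-(t*y)) * (-t * Real.cos (2*y) + 2 * Real.sin (2*y)) / (t^2+4))
      atTop (nhds 0) := by
    rw [show (0:ℝ) = 0 / (t^2+4) by simp]
    apply Tendsto.div_const
    have hg : Tendsto (fun y : ℝ => Real.exp (-(t*y)) * (|t| + 2)) atTop (nhds 0) := by
      have h' : Tendsto (fun y : ℝ => t * y) atTop atTop := tendsto_id.const_mul_atTop ht
      simpa using (Real.tendsto_exp_neg_atTop_nhds_zero.comp h').mul_const (|t|+2)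
    apply squeeze_zero_norm _ hg
    · intro y
      rw [Real.norm_eq_abs, abs_mul, Real.abs_exp]
      gcongr
      calc |(-t * Real.cos (2*y) + 2 * Real.sin (2*y))| ≤ |(-t * Real.cos (2*y))| + |2 * Real.sin (2*y)| := abs_add_le _ _
      _ ≤ |t| * 1 + 2 * 1 := by
          rw [abs_mul, abs_mul, abs_neg]
          gcongr
          · exact Real.abs_cos_le_one _
          · rw [abs_two]
          · exact Real.abs_sin_le_one _
      _ = |t| + 2 := by ring
  have := integral_Ioi_of_hasDerivAt_of_tendsto' (fun y _ => key y) (cos_exp_int ht) htend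
  rw [this]
  simp
  field_simp

lemma sin_sq_exp_int {t : ℝ} (ht : 0 < t) :
    IntegrableOn (fun y : ℝ => Real.sin y ^ 2 * Real.exp (-(t * y))) (Ioi 0) := by
  apply Integrable.mono (exp_int ht)
  · exact (((Real.continuous_sin.pow 2).mul
      (Real.continuous_exp.comp (continuous_const.mul continuous_id).neg))).aestronglyMeasurable
  · filter_upwards with y
    rw [Real.norm_eq_abs, Real.norm_eq_abs, abs_mul, Real.abs_exp, abs_of_nonneg (sq_nonneg (Real.sin y))]
    nlinarith [Real.sin_sq_le_one y, Real.exp_pos (-(t*y))]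

lemma int_sin_sq_exp {t : ℝ} (ht : 0 < t) :
    ∫ y in Ioi (0:ℝ), Real.sin y ^ 2 * Real.exp (-(t * y)) = 2 / (t * (t^2 + 4)) := by
  have heq : ∀ y : ℝ, Real.sin y ^ 2 * Real.exp (-(t * y)) =
      (1/2) * Real.exp (-(t*y)) - (1/2) * (Real.cos (2*y) * Real.exp (-(t*y))) := by
    intro y
    rw [Real.sin_sq]
    rw [Real.cos_two_mul]
    ring
  calc ∫ y in Ioi (0:ℝ), Real.sin y ^ 2 * Real.exp (-(t * y))
      = ∫ y in Ioi (0:ℝ), ((1/2) * Real.exp (-(t*y)) - (1/2) * (Real.cos (2*y) * Real.exp (-(t*y)))) := by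
        exact integral_congr_ae (Filter.Eventually.of_forall fun y => heq y)
    _ = (1/2) * (1/t) - (1/2) * (t/(t^2+4)) := by
        rw [integral_sub ((exp_int ht).const_mul _) ((cos_exp_int ht).const_mul _),
          integral_const_mul, integral_const_mul, int_exp ht, int_cos_exp ht]
    _ = 2 / (t * (t^2 + 4)) := by field_simp; ring

lemma int_two_div_sq_add_four :
    IntegrableOn (fun t : ℝ => 2 / (t^2 + 4)) (Ioi 0) ∧
    ∫ t in Ioi (0:ℝ), 2 / (t^2 + 4) = π / 2 := by
  have hcont : Continuous (fun t : ℝ => 2 / (t^2 + 4)) := by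
    apply continuous_const.div (by continuity)
    intro t; positivity
  have hint : IntegrableOn (fun t : ℝ => 2 / (t^2 + 4)) (Ioi 0) := by
    apply Integrable.mono ((integrable_inv_one_add_sq.const_mul 2).restrict (s := Ioi 0))
    · exact hcont.aestronglyMeasurable
    · filter_upwards with t
      rw [Real.norm_eq_abs, Real.norm_eq_abs, abs_of_nonneg (by positivity),
        abs_of_nonneg (by positivity)]
      rw [inv_eq_one_div, mul_one_div, div_le_div_iff₀ (by positivity) (by positivity)]
      nlinarith
  refine ⟨hint, ?_⟩
  have key : ∀ t : ℝ, HasDerivAt (fun t : ℝ => Real.arctan (t/2)) (2 / (t^2+4)) t := by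
    intro t
    have := (Real.hasDerivAt_arctan (t/2)).comp t ((hasDerivAt_id t).div_const 2)
    refine this.congr_deriv ?_
    field_simp
    ring
  have htend : Tendsto (fun t : ℝ => Real.arctan (t/2)) atTop (nhds (π/2)) := by
    apply tendsto_nhds_of_tendsto_nhdsWithin (s := Iio (π/2))
    exact Real.tendsto_arctan_atTop.comp (tendsto_id.atTop_div_const two_pos)
  have := integral_Ioi_of_hasDerivAt_of_tendsto' (fun t _ => key t) hint htend
  simpa using this

section main


noncomputable def F : ℝ × ℝ → ℝ := fun p => Real.sin p.2 ^ 2 * (p.1 * Real.exp (-(p.1 * p.2)))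

lemma F_cont : Continuous F := by
  unfold F
  fun_prop

lemma F_integrable : Integrable F ((volume.restrict (Ioi (0:ℝ))).prod (volume.restrict (Ioi (0:ℝ)))) := by
  rw [integrable_prod_iff (F_cont.aestronglyMeasurable)]
  constructor
  · filter_upwards [ae_restrict_mem measurableSet_Ioi] with t ht
    have : Integrable (fun y => t * (Real.sin y ^ 2 * Real.exp (-(t * y)))) (volume.restrict (Ioi (0:ℝ))) :=
      (sin_sq_exp_int ht).const_mul t
    apply this.congr
    filter_upwards with y
    unfold F; ring
  · have hmain : (fun t => ∫ y, ‖F (t, y)‖ ∂(volume.restrict (Ioi (0:ℝ)))) =ᵐ[(volume.restrict (Ioi (0:ℝ)))] (fun t => 2 / (t^2 + 4)) := by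
      filter_upwards [ae_restrict_mem measurableSet_Ioi] with t ht
      have ht0 : (0:ℝ) < t := ht
      have h1 : (fun y => ‖F (t, y)‖) =ᵐ[(volume.restrict (Ioi (0:ℝ)))] (fun y => t * (Real.sin y ^ 2 * Real.exp (-(t * y)))) := by
        filter_upwards with y
        unfold F
        rw [Real.norm_eq_abs, abs_of_nonneg (by positivity)]
        ring
      rw [integral_congr_ae h1, integral_const_mul, int_sin_sq_exp ht]
      rw [eq_div_iff (by positivity)]
      field_simp
    exact (int_two_div_sq_add_four.1.congr hmain.symm)

theorem stmt_5 :
    MeasureTheory.IntegrableOn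
      (fun y : ℝ => if y = 0 then (1 : ℝ) else Real.sin y ^ 2 / y ^ 2) (Set.Ioi 0) ∧
    ∫ y in Set.Ioi (0 : ℝ), (if y = 0 then (1 : ℝ) else Real.sin y ^ 2 / y ^ 2) =
      Real.pi / 2 := by
  have h_ae : (fun y => ∫ t, F (t, y) ∂(volume.restrict (Ioi (0:ℝ)))) =ᵐ[(volume.restrict (Ioi (0:ℝ)))]
      (fun y : ℝ => if y = 0 then (1 : ℝ) else Real.sin y ^ 2 / y ^ 2) := by
    filter_upwards [ae_restrict_mem measurableSet_Ioi] with y hy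
    have hy0 : y ≠ 0 := ne_of_gt hy
    rw [if_neg hy0]
    have : (fun t => F (t, y)) = (fun t => Real.sin y ^ 2 * (t * Real.exp (-(y * t)))) := by
      funext t; unfold F; rw [mul_comm y t]
    rw [this, integral_const_mul, (int_t_exp hy).2]
    field_simp
  have hswap : ∫ t, ∫ y, F (t, y) ∂(volume.restrict (Ioi (0:ℝ))) ∂(volume.restrict (Ioi (0:ℝ))) = ∫ y, ∫ t, F (t, y) ∂(volume.restrict (Ioi (0:ℝ))) ∂(volume.restrict (Ioi (0:ℝ))) :=
    integral_integral_swap (f := fun t y => F (t, y)) F_integrable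
  have hlhs : ∫ t, ∫ y, F (t, y) ∂(volume.restrict (Ioi (0:ℝ))) ∂(volume.restrict (Ioi (0:ℝ))) = π / 2 := by
    have h1 : (fun t => ∫ y, F (t, y) ∂(volume.restrict (Ioi (0:ℝ)))) =ᵐ[(volume.restrict (Ioi (0:ℝ)))] (fun t => 2 / (t^2 + 4)) := by
      filter_upwards [ae_restrict_mem measurableSet_Ioi] with t ht
      have : (fun y => F (t, y)) = (fun y => t * (Real.sin y ^ 2 * Real.exp (-(t * y)))) := by
        funext y; unfold F; ring
      have ht0 : (0:ℝ) < t := ht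
      rw [this, integral_const_mul, int_sin_sq_exp ht]
      rw [eq_div_iff (by positivity)]
      field_simp
    rw [integral_congr_ae h1]
    exact int_two_div_sq_add_four.2
  constructor
  · exact (F_integrable.integral_prod_right).congr h_ae
  · calc ∫ y in Set.Ioi (0 : ℝ), (if y = 0 then (1 : ℝ) else Real.sin y ^ 2 / y ^ 2)
        = ∫ y, ∫ t, F (t, y) ∂(volume.restrict (Ioi (0:ℝ))) ∂(volume.restrict (Ioi (0:ℝ))) := (integral_congr_ae h_ae).symm
      _ = π / 2 := by rw [← hswap, hlhs]

end main
end
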